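/- Let n ≥ 1, let α : ℝⁿ → ℝ^{n×n} be a smooth map with α(x) symmetric positive definite for every x, let Γ* : ℝⁿ → ℝ^{n×n×n} be smooth with ∂α_{jk}/∂xⁱ = Σ_l (α_{lk}Γ*_{ij}^l + α_{jl}Γ*_{ik}^l) everywhere, and let β₁,…,βₙ : ℝⁿ → ℝ be smooth. Define F(x,y) = √(Σ_{j,k} α_{jk}(x)y_jy_k) + Σ_j β_j(x)·y_j. Let p ∈ ℝⁿ be a point with β_k(p) = 0 for all k ≠ n and β_n(p) ≠ 0. Then for every y ≠ 0 and every i ∈ {1,…,n}: −(2/β_n(p))·(∂F/∂xⁱ(p,y) − Σ_{j,k} y_j·Γ*_{ij}^k(p)·∂F/∂yᵏ(p,y)) = 2·Σ_j (Γ*_{ij}^n(p) − (1/β_n(p))·∂β_j/∂xⁱ(p))·y_j. -/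

import Mathlib

open Finset

/-- The Randers metric `F(x,y) = √(Σ_{j,k} α_{jk}(x)·y_j·y_k) + Σ_j β_j(x)·y_j` in local
coordinates. -/
noncomputable def randersMetric (n : ℕ) (α : (Fin n → ℝ) → Matrix (Fin n) (Fin n) ℝ)
    (β : Fin n → (Fin n → ℝ) → ℝ) (x y : Fin n → ℝ) : ℝ :=
  Real.sqrt (∑ j : Fin n, ∑ k : Fin n, α x j k * y j * y k) + ∑ j : Fin n, β j x * y j

/-- in adapted coordinates at `p` (where `β_k(p) = 0` for `k ≠ n` and
`β_n(p) ≠ 0`), the right-hand side of the compatibility equations of a Randers metric is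
`−(2/β_n(p))·X_i^{h*}F(p,y) = 2·Σ_j (Γ*_{ij}^n(p) − (1/β_n(p))·∂β_j/∂xⁱ(p))·y_j`. -/
theorem randers_rhs_linear (n : ℕ) (hn : 1 ≤ n)
    (α : (Fin n → ℝ) → Matrix (Fin n) (Fin n) ℝ)
    (hαsmooth : ∀ j k : Fin n, ContDiff ℝ (⊤ : ℕ∞) fun x => α x j k)
    (hαsymm : ∀ x, (α x).IsSymm)
    (hαpos : ∀ x, (α x).PosDef)
    (Γs : (Fin n → ℝ) → Fin n → Fin n → Fin n → ℝ)
    (hΓsmooth : ∀ i j k : Fin n, ContDiff ℝ (⊤ : ℕ∞) fun x => Γs x i j k)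
    (hmet : ∀ (x : Fin n → ℝ) (i j k : Fin n),
      fderiv ℝ (fun x' => α x' j k) x (Pi.single i 1) =
        ∑ l : Fin n, (α x l k * Γs x i j l + α x j l * Γs x i k l))
    (β : Fin n → (Fin n → ℝ) → ℝ)
    (hβsmooth : ∀ j : Fin n, ContDiff ℝ (⊤ : ℕ∞) (β j))
    (p : Fin n → ℝ)
    (hβ0 : ∀ k : Fin n, k ≠ ⟨n - 1, by omega⟩ → β k p = 0)
    (hβn : β ⟨n - 1, by omega⟩ p ≠ 0) :
    ∀ y : Fin n → ℝ, y ≠ 0 → ∀ i : Fin n,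
      -(2 / β ⟨n - 1, by omega⟩ p) *
          (fderiv ℝ (fun x' => randersMetric n α β x' y) p (Pi.single i 1) -
            ∑ j : Fin n, ∑ k : Fin n,
              y j * Γs p i j k *
                fderiv ℝ (fun y' => randersMetric n α β p y') y (Pi.single k 1)) =
        2 * ∑ j : Fin n,
          (Γs p i j ⟨n - 1, by omega⟩ -
              (1 / β ⟨n - 1, by omega⟩ p) * fderiv ℝ (β j) p (Pi.single i 1)) * y j := by
  intro y hy i
  have hnlt : n - 1 < n := by omega
  set nn : Fin n := ⟨n - 1, hnlt⟩ with hnndef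
  have hβn' : β nn p ≠ 0 := hβn
  have hβ0' : ∀ k : Fin n, k ≠ nn → β k p = 0 := hβ0
  show -(2 / β nn p) *
      (fderiv ℝ (fun x' => randersMetric n α β x' y) p (Pi.single i 1) -
        ∑ j : Fin n, ∑ k : Fin n, y j * Γs p i j k *
            fderiv ℝ (fun y' => randersMetric n α β p y') y (Pi.single k 1)) =
    2 * ∑ j : Fin n, (Γs p i j nn - (1 / β nn p) * fderiv ℝ (β j) p (Pi.single i 1)) * y j
  -- positivity of the quadratic form
  have hApos : 0 < ∑ j : Fin n, ∑ k : Fin n, α p j k * y j * y k := by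
    have h := (hαpos p).dotProduct_mulVec_pos hy
    simp only [star_trivial, dotProduct, Matrix.mulVec, Finset.mul_sum] at h
    exact lt_of_lt_of_eq h
      (Finset.sum_congr rfl fun j _ => Finset.sum_congr rfl fun k _ => by ring)
  set s : ℝ := Real.sqrt (∑ j : Fin n, ∑ k : Fin n, α p j k * y j * y k) with hs
  -- derivative in x
  have hαd : ∀ j k : Fin n, HasFDerivAt (fun x => α x j k) (fderiv ℝ (fun x => α x j k) p) p :=
    fun j k => (((hαsmooth j k).differentiable (by simp)) p).hasFDerivAt
  have hβd : ∀ j : Fin n, HasFDerivAt (β j) (fderiv ℝ (β j) p) p :=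
    fun j => (((hβsmooth j).differentiable (by simp)) p).hasFDerivAt
  have hg : HasFDerivAt (fun x => ∑ j : Fin n, ∑ k : Fin n, α x j k * y j * y k)
      (∑ j : Fin n, ∑ k : Fin n, y k • (y j • fderiv ℝ (fun x => α x j k) p)) p :=
    HasFDerivAt.fun_sum fun j _ => HasFDerivAt.fun_sum fun k _ =>
      ((hαd j k).mul_const (y j)).mul_const (y k)
  have hFx : HasFDerivAt (fun x' => randersMetric n α β x' y)
      ((1 / (2 * s)) •
          (∑ j : Fin n, ∑ k : Fin n, y k • (y j • fderiv ℝ (fun x => α x j k) p))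
        + ∑ j : Fin n, y j • fderiv ℝ (β j) p) p := by
    unfold randersMetric
    exact (hg.sqrt hApos.ne').add (HasFDerivAt.fun_sum fun j _ => (hβd j).mul_const (y j))
  have hx_eval : fderiv ℝ (fun x' => randersMetric n α β x' y) p (Pi.single i 1) =
      (1 / (2 * s)) * (∑ j : Fin n, ∑ k : Fin n,
          y k * (y j * (∑ l : Fin n, (α p l k * Γs p i j l + α p j l * Γs p i k l))))
        + ∑ j : Fin n, y j * fderiv ℝ (β j) p (Pi.single i 1) := by
    rw [hFx.fderiv]
    simp only [ContinuousLinearMap.add_apply, ContinuousLinearMap.coe_smul', Pi.smul_apply,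
      ContinuousLinearMap.coe_sum', Finset.sum_apply, smul_eq_mul, hmet]
  -- derivative in y
  have hproj : ∀ m : Fin n, HasFDerivAt (fun y' : Fin n → ℝ => y' m)
      (ContinuousLinearMap.proj (R := ℝ) (φ := fun _ : Fin n => ℝ) m) y := fun m =>
    (ContinuousLinearMap.proj (R := ℝ) (φ := fun _ : Fin n => ℝ) m).hasFDerivAt
  have hh : HasFDerivAt (fun y' : Fin n → ℝ => ∑ j : Fin n, ∑ k : Fin n, α p j k * y' j * y' k)
      (∑ j : Fin n, ∑ k : Fin n,
        ((α p j k * y j) • (ContinuousLinearMap.proj (R := ℝ) (φ := fun _ : Fin n => ℝ) k)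
          + y k • (α p j k • (ContinuousLinearMap.proj (R := ℝ) (φ := fun _ : Fin n => ℝ) j)))) y :=
    HasFDerivAt.fun_sum fun j _ => HasFDerivAt.fun_sum fun k _ =>
      ((hproj j).const_mul (α p j k)).mul (hproj k)
  have hFy : HasFDerivAt (fun y' => randersMetric n α β p y')
      ((1 / (2 * s)) • (∑ j : Fin n, ∑ k : Fin n,
          ((α p j k * y j) • (ContinuousLinearMap.proj (R := ℝ) (φ := fun _ : Fin n => ℝ) k)
            + y k • (α p j k • (ContinuousLinearMap.proj (R := ℝ) (φ := fun _ : Fin n => ℝ) j))))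
        + ∑ j : Fin n, (β j p) • (ContinuousLinearMap.proj (R := ℝ) (φ := fun _ : Fin n => ℝ) j)) y := by
    unfold randersMetric
    exact (hh.sqrt hApos.ne').add (HasFDerivAt.fun_sum fun j _ => (hproj j).const_mul (β j p))
  have hy_eval : ∀ m : Fin n, fderiv ℝ (fun y' => randersMetric n α β p y') y (Pi.single m 1) =
      (1 / (2 * s)) * ((∑ j : Fin n, α p j m * y j) + ∑ j : Fin n, α p m j * y j) + β m p := by
    intro m
    rw [hFy.fderiv]
    simp [ContinuousLinearMap.add_apply, ContinuousLinearMap.coe_smul', Pi.smul_apply,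
      ContinuousLinearMap.coe_sum', Finset.sum_apply, smul_eq_mul,
      ContinuousLinearMap.proj_apply, Pi.single_apply, mul_ite, mul_one, mul_zero,
      Finset.sum_add_distrib, Finset.sum_ite_eq', Finset.mem_univ, if_true, mul_comm]
    ring
  -- the key cancellation identity
  have e1 : (∑ j : Fin n, ∑ k : Fin n, ∑ l : Fin n, y k * (y j * (α p l k * Γs p i j l)))
      = ∑ j : Fin n, ∑ k : Fin n, y j * Γs p i j k * (∑ m : Fin n, α p k m * y m) := by
    refine Finset.sum_congr rfl fun j _ => ?_
    rw [Finset.sum_comm]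
    refine Finset.sum_congr rfl fun l _ => ?_
    rw [Finset.mul_sum]
    refine Finset.sum_congr rfl fun k _ => ?_
    ring
  have e2 : (∑ j : Fin n, ∑ k : Fin n, ∑ l : Fin n, y k * (y j * (α p j l * Γs p i k l)))
      = ∑ j : Fin n, ∑ k : Fin n, y j * Γs p i j k * (∑ m : Fin n, α p m k * y m) := by
    rw [Finset.sum_comm]
    refine Finset.sum_congr rfl fun b _ => ?_
    rw [Finset.sum_comm]
    refine Finset.sum_congr rfl fun l _ => ?_
    rw [Finset.mul_sum]
    refine Finset.sum_congr rfl fun j _ => ?_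
    ring
  have key : (∑ j : Fin n, ∑ k : Fin n,
        y k * (y j * (∑ l : Fin n, (α p l k * Γs p i j l + α p j l * Γs p i k l))))
      = ∑ j : Fin n, ∑ k : Fin n, y j * Γs p i j k *
          ((∑ m : Fin n, α p m k * y m) + ∑ m : Fin n, α p k m * y m) := by
    have lhs_eq : (∑ j : Fin n, ∑ k : Fin n,
          y k * (y j * (∑ l : Fin n, (α p l k * Γs p i j l + α p j l * Γs p i k l))))
        = (∑ j : Fin n, ∑ k : Fin n, ∑ l : Fin n, y k * (y j * (α p l k * Γs p i j l)))
          + ∑ j : Fin n, ∑ k : Fin n, ∑ l : Fin n, y k * (y j * (α p j l * Γs p i k l)) := by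
      rw [← Finset.sum_add_distrib]
      refine Finset.sum_congr rfl fun j _ => ?_
      rw [← Finset.sum_add_distrib]
      refine Finset.sum_congr rfl fun k _ => ?_
      rw [Finset.mul_sum, Finset.mul_sum, ← Finset.sum_add_distrib]
      exact Finset.sum_congr rfl fun l _ => by ring
    have rhs_eq : (∑ j : Fin n, ∑ k : Fin n, y j * Γs p i j k *
          ((∑ m : Fin n, α p m k * y m) + ∑ m : Fin n, α p k m * y m))
        = (∑ j : Fin n, ∑ k : Fin n, y j * Γs p i j k * (∑ m : Fin n, α p m k * y m))
          + ∑ j : Fin n, ∑ k : Fin n, y j * Γs p i j k * (∑ m : Fin n, α p k m * y m) := by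
      rw [← Finset.sum_add_distrib]
      refine Finset.sum_congr rfl fun j _ => ?_
      rw [← Finset.sum_add_distrib]
      refine Finset.sum_congr rfl fun k _ => ?_
      ring
    rw [lhs_eq, rhs_eq, e1, e2, add_comm]
  -- split the Γ-weighted sum of y-derivatives
  have split : (∑ j : Fin n, ∑ k : Fin n, y j * Γs p i j k *
        ((1 / (2 * s)) * ((∑ m : Fin n, α p m k * y m) + ∑ m : Fin n, α p k m * y m) + β k p))
      = (1 / (2 * s)) * (∑ j : Fin n, ∑ k : Fin n, y j * Γs p i j k *
          ((∑ m : Fin n, α p m k * y m) + ∑ m : Fin n, α p k m * y m))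
        + ∑ j : Fin n, ∑ k : Fin n, y j * Γs p i j k * β k p := by
    rw [Finset.mul_sum, ← Finset.sum_add_distrib]
    refine Finset.sum_congr rfl fun j _ => ?_
    rw [Finset.mul_sum, ← Finset.sum_add_distrib]
    refine Finset.sum_congr rfl fun k _ => ?_
    ring
  have hP : (∑ j : Fin n, ∑ k : Fin n, y j * Γs p i j k * β k p)
      = ∑ j : Fin n, y j * Γs p i j nn * β nn p := by
    refine Finset.sum_congr rfl fun j _ => ?_
    refine Finset.sum_eq_single nn (fun k _ hk => by rw [hβ0' k hk]; ring) (by simp)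
  rw [hx_eval]
  simp only [hy_eval]
  rw [split, key, hP, add_sub_add_left_eq_sub, ← Finset.sum_sub_distrib, Finset.mul_sum,
    Finset.mul_sum]
  refine Finset.sum_congr rfl fun j _ => ?_
  field_simp
  ring
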